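/- If N is a multiple-labelled network realizing a ploidy profile m and N' is obtained from N by a single split operation, then N' is a multiple-labelled network realizing m. -/

import Mathlib

/-!
Formalization preamble for "Autopolyploidy, allopolyploidy, and phylogenetic
networks with horizontal arcs" (Huber & Maher).

Networks are finite directed multigraphs whose vertices and arcs are (finitely
many) natural numbers; parallel arcs (beads) are allowed, loops are not.
-/

namespace Ploidy

/-- A finite directed multigraph: both vertex names and arc identifiers are
natural numbers; `src`/`tgt` give the endpoints of each arc. -/
structure Net where
  verts : Finset ℕ
  arcs : Finset ℕ
  src : ℕ → ℕ
  tgt : ℕ → ℕ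

/-- The indegree of a vertex. -/
def inDeg (G : Net) (v : ℕ) : ℕ := (G.arcs.filter fun a => G.tgt a = v).card

/-- The outdegree of a vertex. -/
def outDeg (G : Net) (v : ℕ) : ℕ := (G.arcs.filter fun a => G.src a = v).card

def IsLeafN (G : Net) (v : ℕ) : Prop := v ∈ G.verts ∧ inDeg G v = 1 ∧ outDeg G v = 0
def IsTreeVert (G : Net) (v : ℕ) : Prop := v ∈ G.verts ∧ inDeg G v = 1 ∧ outDeg G v = 2
def IsReticN (G : Net) (v : ℕ) : Prop := v ∈ G.verts ∧ inDeg G v = 2 ∧ outDeg G v = 1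
def IsRootN (G : Net) (v : ℕ) : Prop := v ∈ G.verts ∧ inDeg G v = 0

instance (G : Net) (v : ℕ) : Decidable (IsLeafN G v) :=
  decidable_of_iff (v ∈ G.verts ∧ inDeg G v = 1 ∧ outDeg G v = 0) Iff.rfl

/-- `IsWalk G l u v`: the list of arcs `l` forms a directed walk from `u` to `v`. -/
def IsWalk (G : Net) : List ℕ → ℕ → ℕ → Prop
  | [], u, v => u = v ∧ u ∈ G.verts
  | a :: l, u, v => a ∈ G.arcs ∧ G.src a = u ∧ IsWalk G l (G.tgt a) v

/-- The number of directed paths from `u` to `v` (in a DAG every directed walk is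
a path, and there are finitely many of them). -/
noncomputable def nPaths (G : Net) (u v : ℕ) : ℕ := Set.ncard {l : List ℕ | IsWalk G l u v}

/-- `a` is an arc from `u` to `v`. -/
def ArcFT (G : Net) (a u v : ℕ) : Prop := a ∈ G.arcs ∧ G.src a = u ∧ G.tgt a = v

/-- `u` is a parent of `v`. -/
def IsParent (G : Net) (u v : ℕ) : Prop := ∃ a, ArcFT G a u v

/-- `w` is below `u` (reachable from `u` by a directed walk, possibly `u = w`). -/
def BelowV (G : Net) (u w : ℕ) : Prop := ∃ l, IsWalk G l u w

/-- `v` is an end vertex of a pair of parallel arcs (a bead). -/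
def InBead (G : Net) (v : ℕ) : Prop :=
  ∃ a b, a ∈ G.arcs ∧ b ∈ G.arcs ∧ a ≠ b ∧ G.src a = G.src b ∧ G.tgt a = G.tgt b ∧
    (G.src a = v ∨ G.tgt a = v)

/-- `G` is beadless: there is no pair of parallel arcs. -/
def Beadless (G : Net) : Prop := ∀ v, ¬ InBead G v

/-- `G` is a (rooted, binary) phylogenetic network in the sense of Huber–Maher:
a rooted DAG, possibly with beads but without loops, with a unique root of
indegree 0 and outdegree 2, all of whose other vertices are leaves, tree
vertices or reticulation vertices. -/
structure IsPhylo (G : Net) : Prop where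
  src_mem : ∀ a ∈ G.arcs, G.src a ∈ G.verts
  tgt_mem : ∀ a ∈ G.arcs, G.tgt a ∈ G.verts
  no_loop : ∀ a ∈ G.arcs, G.src a ≠ G.tgt a
  acyclic : ∀ (v : ℕ) (l : List ℕ), l ≠ [] → ¬ IsWalk G l v v
  root_exu : ∃! r, IsRootN G r
  root_out : ∀ r, IsRootN G r → outDeg G r = 2
  types : ∀ v ∈ G.verts, IsRootN G v ∨ IsLeafN G v ∨ IsTreeVert G v ∨ IsReticN G v

/-- An HGT-consistent labelling: (P1), (P2) and (P3) (the latter required only for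
reticulation vertices not contained in beads). -/
def IsHGT (G : Net) (t : ℕ → ℝ) : Prop :=
  (∀ v ∈ G.verts, 0 ≤ t v) ∧
  (∀ a ∈ G.arcs,
      (IsReticN G (G.tgt a) → t (G.src a) ≤ t (G.tgt a)) ∧
      (¬ IsReticN G (G.tgt a) → t (G.src a) < t (G.tgt a))) ∧
  (∀ u ∈ G.verts, ¬ IsLeafN G u → ∃ v, IsParent G u v ∧ t u < t v) ∧
  (∀ v, IsReticN G v → ¬ InBead G v → ∃! u, IsParent G u v ∧ t u = t v)

/-- `v` is a reticulation vertex (not contained in a bead) violating (P3). -/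
def ViolatesP3 (G : Net) (t : ℕ → ℝ) (v : ℕ) : Prop :=
  IsReticN G v ∧ ¬ InBead G v ∧ ¬ (∃! u, IsParent G u v ∧ t u = t v)

/-- A weak HGT-consistent labelling: (P1), (P2) and (P3'): at most one reticulation
vertex `v`, with distinct parents `u₁, u₂` such that `u₂` is below `u₁` and
`t u₁ ≠ t v ≠ t u₂`, violates (P3). -/
def IsWeakHGT (G : Net) (t : ℕ → ℝ) : Prop :=
  (∀ v ∈ G.verts, 0 ≤ t v) ∧
  (∀ a ∈ G.arcs,
      (IsReticN G (G.tgt a) → t (G.src a) ≤ t (G.tgt a)) ∧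
      (¬ IsReticN G (G.tgt a) → t (G.src a) < t (G.tgt a))) ∧
  (∀ u ∈ G.verts, ¬ IsLeafN G u → ∃ v, IsParent G u v ∧ t u < t v) ∧
  (∀ v w, ViolatesP3 G t v → ViolatesP3 G t w → v = w) ∧
  (∀ v, ViolatesP3 G t v →
      ∃ u1 u2, u1 ≠ u2 ∧ IsParent G u1 v ∧ IsParent G u2 v ∧ BelowV G u1 u2 ∧
        t u1 ≠ t v ∧ t u2 ≠ t v)

/-! ### Ploidy profiles and the simplification sequence -/

/-- A ploidy profile: a nonempty descending list of positive integers; the entry at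
(0-based) position `i` is indexed by the taxon `x_{i+1}`. -/
def IsProfileL (l : List ℕ) : Prop := l ≠ [] ∧ l.Pairwise (· ≥ ·) ∧ ∀ x ∈ l, 1 ≤ x

/-- A simple ploidy profile: first component at least 2, all other components 1. -/
def IsSimpleP (l : List ℕ) : Prop := l ≠ [] ∧ 2 ≤ l.headI ∧ ∀ x ∈ l.tail, x = 1

/-- A strictly simple ploidy profile. -/
def IsStrictlySimpleP (l : List ℕ) : Prop := IsSimpleP l ∧ l.length = 1

/-- Insert `x` into a descending list, directly after the last occurrence of the
value `x` (i.e. after all entries `≥ x`). -/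
def insertDesc (x : ℕ) : List ℕ → List ℕ
  | [] => [x]
  | y :: ys => if x ≤ y then y :: insertDesc x ys else x :: y :: ys

/-- One step of the simplification process for ploidy profiles; simple profiles are
fixed points.  With `α = m₁ - m₂`: if `α = 0` delete `m₁`; if `α > m₂` replace `m₁`
by `α`; if `0 < α ≤ m₂` delete `m₁` and insert `α` directly after the last
occurrence of the value `α`. -/
def simpStep (l : List ℕ) : List ℕ :=
  if 2 ≤ l.headI ∧ ∀ x ∈ l.tail, x = 1 then l
  else
    match l with
    | m1 :: m2 :: rest =>
        if m1 = m2 then m2 :: rest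
        else if m2 < m1 - m2 then (m1 - m2) :: m2 :: rest
        else insertDesc (m1 - m2) (m2 :: rest)
    | _ => l

/-- `mt` is the (simple) terminal element of the simplification sequence of `m`. -/
def IsTerminal (m mt : List ℕ) : Prop := IsSimpleP mt ∧ ∃ k, simpStep^[k] m = mt

/-- A practical ploidy profile: simple but not strictly simple, or `(2^l)`, `l ≥ 1`. -/
def Practical (l : List ℕ) : Prop :=
  (IsSimpleP l ∧ 2 ≤ l.length) ∨ (l.length = 1 ∧ ∃ j, 1 ≤ j ∧ l.headI = 2 ^ j)

/-- An arc-rich (strictly simple) ploidy profile: the binary representation of its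
single component has dimension at least two. -/
def ArcRich (l : List ℕ) : Prop :=
  l.length = 1 ∧ 2 ≤ l.headI ∧ 2 ≤ (Nat.bits l.headI).count true

/-! ### Realizations of ploidy profiles -/

/-- A network together with an indexing of its leaves by the positions of a
ploidy profile. -/
structure LNet where
  net : Net
  leaf : ℕ → ℕ

/-- `R` is a phylogenetic network realizing the ploidy profile `m`: the leaves of
`R.net` are bijectively indexed by the positions of `m` and, for every `i`, the
number of directed paths from the root to the leaf `R.leaf i` is the `i`-th
component of `m`. -/
def RealizesL (R : LNet) (m : List ℕ) : Prop :=
  IsPhylo R.net ∧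
  (∀ i < m.length, IsLeafN R.net (R.leaf i)) ∧
  (∀ i j, i < m.length → j < m.length → R.leaf i = R.leaf j → i = j) ∧
  (∀ v, IsLeafN R.net v → ∃ i < m.length, R.leaf i = v) ∧
  (∀ i < m.length, ∀ r, IsRootN R.net r → nPaths R.net r (R.leaf i) = m.getD i 0)

/-! ### Concrete constructions: bead chains and the core network `B(m)` -/

/-- Build a network from a list of arcs (as (source, target) pairs); arc
identifiers are positions in the list, so repeated pairs yield beads. -/
def mkNet (l : List (ℕ × ℕ)) : Net where
  verts := (l.map Prod.fst ++ l.map Prod.snd).toFinset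
  arcs := Finset.range l.length
  src := fun i => (l.getD i (0, 0)).1
  tgt := fun i => (l.getD i (0, 0)).2

/-- The chain `B(l)` of `l` beads with a pendant leaf: vertex `2*j` is the tree
vertex of the `(j+1)`-st bead, `2*j+1` its reticulation vertex `h_{j+1}`, there is
an arc from `h_j` to the tree vertex of the next bead, and `2*l` is the pendant
leaf `x₁` attached by the arc `(h_l, x₁)`. -/
def beadChain (l : ℕ) : Net :=
  mkNet ((List.range l).flatMap fun j => [(2*j, 2*j+1), (2*j, 2*j+1), (2*j+1, 2*j+2)])

/-- The decreasing list `(i₁, …, i_k)` of exponents of the binary representation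
of `m₁`. -/
def expList (m1 : ℕ) : List ℕ :=
  ((List.range (m1+1)).filter fun j => m1.testBit j).reverse

/-- First vertex code available for the leaves `x_2, …, x_n` in `BNet`. -/
def xBase (m1 : ℕ) : ℕ := 2 * (expList m1).headI + 2 * (expList m1).length + 10

/-- The arcs of the core network `B(m)` for the simple profile `(m₁, 1, …, 1)` on
`n` taxa: a chain of `i₁` beads with pendant leaf `x₁ = 0` (root is the vertex
`2`), one root arc subdivided by `s_k` and, for `2 ≤ j ≤ k`, an arc `(s_j, s_j')`
where `s_j'` subdivides the outgoing arc of the reticulation vertex having exactly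
`i_j` reticulation vertices strictly below it and `s_2, …, s_{k-1}` subdivide the
arc `(s_k, s_k')`; if `n ≥ 2` a caterpillar tree on the leaves `x_2, …, x_n`
(codes `xBase m₁ + i`) is attached via a subdivision vertex `w` (placed on a root
arc if `k = 1`, on `(s_k, s_k')` if `k = 2`, and on `(s_{k-1}, s_k')` if `k ≥ 3`). -/
def BArcs (m1 n : ℕ) : List (ℕ × ℕ) :=
  let E := expList m1
  let k := E.length
  let i1 := E.headI
  let hv : ℕ → ℕ := fun j => 2*j + 1
  let tv : ℕ → ℕ := fun j => 2*j
  let nxt : ℕ → ℕ := fun j => if j = i1 then 0 else 2*j + 2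
  let S' : ℕ → ℕ := fun j => 2*i1 + 2 + j
  let P : ℕ → ℕ := fun j => 2*i1 + k + 2 + j
  let w : ℕ := 2*i1 + 2*k + 4
  let L : ℕ := 2*i1 + 2*k + 10
  let x : ℕ → ℕ := fun i => L + i
  let cv : ℕ → ℕ := fun i => L + n + i
  let r : ℕ → ℕ := fun t => i1 - E.getD (t-1) 0
  let rootArcs : List (ℕ × ℕ) :=
    if 2 ≤ k then [(tv 1, hv 1), (tv 1, P k), (P k, hv 1)]
    else if 2 ≤ n then [(tv 1, hv 1), (tv 1, w), (w, hv 1)]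
    else [(tv 1, hv 1), (tv 1, hv 1)]
  let otherBeads : List (ℕ × ℕ) :=
    (List.range' 2 (i1 - 1)).flatMap fun j => [(tv j, hv j), (tv j, hv j)]
  let chainArcs : List (ℕ × ℕ) :=
    (List.range' 1 i1).flatMap fun j =>
      match (List.range' 2 (k-1)).find? (fun t => r t == j) with
      | some t => [(hv j, S' t), (S' t, nxt j)]
      | none => [(hv j, nxt j)]
  let sChain : List ℕ :=
    [P k] ++ (List.range' 2 (k-2)).map P ++ (if 2 ≤ n then [w] else []) ++ [S' k]
  let sArcs : List (ℕ × ℕ) :=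
    if 2 ≤ k then (sChain.zip sChain.tail) ++ (List.range' 2 (k-2)).map (fun j => (P j, S' j))
    else []
  let catArcs : List (ℕ × ℕ) :=
    if n ≤ 1 then []
    else if n = 2 then [(w, x 2)]
    else [(w, cv 2)] ++
      ((List.range' 2 (n-3)).flatMap fun i => [(cv i, x i), (cv i, cv (i+1))]) ++
      [(cv (n-1), x (n-1)), (cv (n-1), x n)]
  rootArcs ++ otherBeads ++ chainArcs ++ sArcs ++ catArcs

/-- The core network `B(m)` for a simple profile with first component `m1` on `n`
taxa. -/
def BNet (m1 n : ℕ) : Net := mkNet (BArcs m1 n)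

/-- The core network `B(m)` of a ploidy profile whose terminal element is `mt`,
together with its leaf indexing (leaf `0` is `x₁ = 0`, leaf `i` is `x_{i+1}`). -/
def BLNet (mt : List ℕ) : LNet where
  net := BNet mt.headI mt.length
  leaf := fun i => if i = 0 then 0 else xBase mt.headI + (i + 1)

/-- The naive realization of the simple profile `(m₁, 1, …, 1)` on `n` taxa: a
directed path `0, 1, …, n + 2m₁ - 3` (with `v_j = j - 1`, `w_i = m₁ + i - 3`,
`v_j' = n + 2m₁ - 3 - j` and `x₁ = n + 2m₁ - 3`) together with the arcs
`(v_j, v_j')` and the pendant leaf arcs `(w_i, x_i)` with `x_i = n + 2m₁ + i`. -/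
def naiveNet (m1 n : ℕ) : Net :=
  mkNet (((List.range (n + 2*m1 - 3)).map fun p => (p, p+1)) ++
    ((List.range' 1 (m1 - 1)).map fun j => (j - 1, n + 2*m1 - 3 - j)) ++
    ((List.range' 2 (n - 1)).map fun i => (m1 + i - 3, n + 2*m1 + i)))

/-! ### Cherry modification operations -/

/-- `reduce(a,b)`: delete the leaf `b` of the cherry `{a,b}` together with its
incoming arc and suppress the resulting degree-two vertex (collapsing the network
to the single vertex `a` when the common parent is the root). -/
def ReduceOp (G G' : Net) : Prop :=
  ∃ a b p ea eb, a ≠ b ∧ IsLeafN G a ∧ IsLeafN G b ∧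
    ArcFT G ea p a ∧ ArcFT G eb p b ∧ ea ≠ eb ∧
    G'.verts = (G.verts.erase b).erase p ∧
    G'.arcs = (G.arcs.erase eb).erase ea ∧
    ((IsRootN G p ∧ ∀ e ∈ G'.arcs, G'.src e = G.src e ∧ G'.tgt e = G.tgt e) ∨
     (∃ ep q, ArcFT G ep q p ∧
        (∀ e ∈ G'.arcs, e ≠ ep → G'.src e = G.src e ∧ G'.tgt e = G.tgt e) ∧
        G'.src ep = q ∧ G'.tgt ep = a))

/-- `cut(a,b)`: delete the reticulation arc of the reticulate cherry `{a,b}` with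
reticulation leaf `b`, suppressing the two resulting degree-two vertices. -/
def CutOp (G G' : Net) : Prop :=
  ∃ a b pa pb e1 e2 e3 e4 e5 q r,
    a ≠ b ∧ IsLeafN G a ∧ IsLeafN G b ∧ IsReticN G pb ∧
    ArcFT G e1 pa a ∧ ArcFT G e2 pb b ∧ ArcFT G e3 pa pb ∧
    ArcFT G e4 q pb ∧ e3 ≠ e4 ∧ ArcFT G e5 r pa ∧
    G'.verts = (G.verts.erase pa).erase pb ∧
    G'.arcs = ((G.arcs.erase e3).erase e1).erase e2 ∧
    (∀ e ∈ G'.arcs, e ≠ e4 → e ≠ e5 → G'.src e = G.src e ∧ G'.tgt e = G.tgt e) ∧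
    G'.src e5 = r ∧ G'.tgt e5 = a ∧
    G'.src e4 = q ∧ G'.tgt e4 = b

/-- `simp(a)`: for a type-1 degenerate cherry `{a}` (sole leaf whose parent is the
reticulation vertex of a bead), delete one arc of the bead, suppressing the
resulting degree-two vertex and collapsing the outgoing arc of the tree vertex of
the bead. -/
def SimpOp (G G' : Net) : Prop :=
  ∃ a h u e1 e2 e3,
    IsLeafN G a ∧ (∀ w, IsLeafN G w → w = a) ∧ IsReticN G h ∧
    ArcFT G e1 u h ∧ ArcFT G e2 u h ∧ e1 ≠ e2 ∧ ArcFT G e3 h a ∧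
    ((IsRootN G u ∧ G'.verts = {a} ∧ G'.arcs = ∅) ∨
     (∃ eu q, ArcFT G eu q u ∧
        G'.verts = (G.verts.erase h).erase u ∧
        G'.arcs = ((G.arcs.erase e2).erase e3).erase e1 ∧
        (∀ e ∈ G'.arcs, e ≠ eu → G'.src e = G.src e ∧ G'.tgt e = G.tgt e) ∧
        G'.src eu = q ∧ G'.tgt eu = a))

/-- `trim(a)`: for a type-2 degenerate cherry `{a}` (sole leaf whose parent `p` is
a reticulation vertex with distinct parents `q₁, q₂`), delete the arc `(q₁,p)`
(case (a): there is a vertex `q` with arcs `(q,q₁)`, `(q,q₂)`, `(q₁,q₂)`),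
respectively one of the two parallel arcs from `q` to `q₂` (case (b): there is an
arc `(q₁,q)` and a pair of parallel arcs from `q` to `q₂`), suppressing the two
resulting degree-two vertices. -/
def TrimOp (G G' : Net) : Prop :=
  ∃ a p g0, IsLeafN G a ∧ (∀ w, IsLeafN G w → w = a) ∧ IsReticN G p ∧ ArcFT G g0 p a ∧
   ((∃ q q1 q2 f1 f2 f3 g1 g2,
      ArcFT G g1 q1 p ∧ ArcFT G g2 q2 p ∧ g1 ≠ g2 ∧ q1 ≠ q2 ∧
      ArcFT G f1 q q1 ∧ ArcFT G f2 q q2 ∧ ArcFT G f3 q1 q2 ∧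
      G'.verts = (G.verts.erase q1).erase p ∧
      G'.arcs = ((G.arcs.erase g1).erase f3).erase g0 ∧
      (∀ e ∈ G'.arcs, e ≠ f1 → e ≠ g2 → G'.src e = G.src e ∧ G'.tgt e = G.tgt e) ∧
      G'.src f1 = q ∧ G'.tgt f1 = q2 ∧
      G'.src g2 = q2 ∧ G'.tgt g2 = a) ∨
    (∃ q q1 q2 eq' f1 f2 g1 g2,
      ArcFT G g1 q1 p ∧ ArcFT G g2 q2 p ∧ g1 ≠ g2 ∧ q1 ≠ q2 ∧
      ArcFT G eq' q1 q ∧ ArcFT G f1 q q2 ∧ ArcFT G f2 q q2 ∧ f1 ≠ f2 ∧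
      G'.verts = (G.verts.erase q).erase q2 ∧
      G'.arcs = ((G.arcs.erase f2).erase f1).erase g2 ∧
      (∀ e ∈ G'.arcs, e ≠ eq' → G'.src e = G.src e ∧ G'.tgt e = G.tgt e) ∧
      G'.src eq' = q1 ∧ G'.tgt eq' = p))

/-- A single cherry modification operation: reduce, cut or simp. -/
def CherryModOp (G G' : Net) : Prop := ReduceOp G G' ∨ CutOp G G' ∨ SimpOp G G'

/-- A single weak cherry modification operation: reduce, cut, simp or trim. -/
def WeakCherryModOp (G G' : Net) : Prop := CherryModOp G G' ∨ TrimOp G G'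

/-- The network consisting of a single vertex (and no arcs). -/
def IsSingleV (G : Net) : Prop := ∃ v, G.verts = {v} ∧ G.arcs = ∅

/-- `G` admits a complete cherry modification sequence, i.e. `G` is an orchard. -/
def IsOrchardN (G : Net) : Prop :=
  ∃ G', Relation.ReflTransGen CherryModOp G G' ∧ IsSingleV G'

/-- `G` admits a complete weak cherry modification sequence, i.e. `G` is a weak
orchard. -/
def IsWeakOrchardN (G : Net) : Prop :=
  ∃ G', Relation.ReflTransGen WeakCherryModOp G G' ∧ IsSingleV G'

/-! ### The traceback through the simplification sequence -/

/-- Traceback step in case `α = 0`: replace the leaf indexing the first component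
of `m''` by a cherry on two new leaves. -/
def CherryExpandOp (R'' R' : LNet) : Prop :=
  ∃ y1 y2 b1 b2,
    y1 ∉ R''.net.verts ∧ y2 ∉ R''.net.verts ∧ y1 ≠ y2 ∧
    b1 ∉ R''.net.arcs ∧ b2 ∉ R''.net.arcs ∧ b1 ≠ b2 ∧
    R'.net.verts = R''.net.verts ∪ {y1, y2} ∧
    R'.net.arcs = R''.net.arcs ∪ {b1, b2} ∧
    (∀ a ∈ R''.net.arcs, R'.net.src a = R''.net.src a ∧ R'.net.tgt a = R''.net.tgt a) ∧
    R'.net.src b1 = R''.leaf 0 ∧ R'.net.tgt b1 = y1 ∧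
    R'.net.src b2 = R''.leaf 0 ∧ R'.net.tgt b2 = y2 ∧
    R'.leaf 0 = y1 ∧ R'.leaf 1 = y2 ∧ (∀ i, 1 ≤ i → R'.leaf (i + 1) = R''.leaf i)

/-- Traceback step in case `α > m₂'`: subdivide the incoming arcs of the leaves
indexing the first and second components of `m''` by new vertices `u` and `v` and
add the arc `(v,u)`. -/
def AddArcOp (R'' R' : LNet) : Prop :=
  ∃ u v a0 a1 b0 b1 c,
    u ∉ R''.net.verts ∧ v ∉ R''.net.verts ∧ u ≠ v ∧
    a0 ∈ R''.net.arcs ∧ R''.net.tgt a0 = R''.leaf 0 ∧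
    a1 ∈ R''.net.arcs ∧ R''.net.tgt a1 = R''.leaf 1 ∧ a0 ≠ a1 ∧
    b0 ∉ R''.net.arcs ∧ b1 ∉ R''.net.arcs ∧ c ∉ R''.net.arcs ∧
    b0 ≠ b1 ∧ b0 ≠ c ∧ b1 ≠ c ∧
    R'.net.verts = R''.net.verts ∪ {u, v} ∧
    R'.net.arcs = R''.net.arcs ∪ {b0, b1, c} ∧
    (∀ a ∈ R''.net.arcs, a ≠ a0 → a ≠ a1 →
        R'.net.src a = R''.net.src a ∧ R'.net.tgt a = R''.net.tgt a) ∧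
    R'.net.src a0 = R''.net.src a0 ∧ R'.net.tgt a0 = u ∧
    R'.net.src a1 = R''.net.src a1 ∧ R'.net.tgt a1 = v ∧
    R'.net.src b0 = u ∧ R'.net.tgt b0 = R''.leaf 0 ∧
    R'.net.src b1 = v ∧ R'.net.tgt b1 = R''.leaf 1 ∧
    R'.net.src c = v ∧ R'.net.tgt c = u ∧
    (∀ i, R'.leaf i = R''.leaf i)

/-- Traceback step in case `0 < α ≤ m₂'`, where the inserted component `α` sits at
(0-based) position `j` of `m''`: subdivide the incoming arc of the leaf indexing
`α` by a vertex `v`, replace the leaf indexing the first component of `m''` by a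
cherry, subdivide the incoming arc of one of the two new cherry leaves by a vertex
`u`, add the arc `(v,u)` and delete the leaf indexing `α` together with its
incoming arc, suppressing the resulting degree-two vertex. -/
def InsertBackOp (j : ℕ) (R'' R' : LNet) : Prop :=
  ∃ u y1 y2 c1 c2 c3 az,
    u ∉ R''.net.verts ∧ y1 ∉ R''.net.verts ∧ y2 ∉ R''.net.verts ∧
    u ≠ y1 ∧ u ≠ y2 ∧ y1 ≠ y2 ∧
    c1 ∉ R''.net.arcs ∧ c2 ∉ R''.net.arcs ∧ c3 ∉ R''.net.arcs ∧
    c1 ≠ c2 ∧ c1 ≠ c3 ∧ c2 ≠ c3 ∧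
    az ∈ R''.net.arcs ∧ R''.net.tgt az = R''.leaf j ∧
    R'.net.verts = (R''.net.verts.erase (R''.leaf j)) ∪ {u, y1, y2} ∧
    R'.net.arcs = R''.net.arcs ∪ {c1, c2, c3} ∧
    (∀ a ∈ R''.net.arcs, a ≠ az →
        R'.net.src a = R''.net.src a ∧ R'.net.tgt a = R''.net.tgt a) ∧
    R'.net.src az = R''.net.src az ∧ R'.net.tgt az = u ∧
    R'.net.src c1 = R''.leaf 0 ∧ R'.net.tgt c1 = u ∧
    R'.net.src c2 = u ∧ R'.net.tgt c2 = y1 ∧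
    R'.net.src c3 = R''.leaf 0 ∧ R'.net.tgt c3 = y2 ∧
    R'.leaf 0 = y1 ∧ R'.leaf 1 = y2 ∧
    (∀ i, 1 ≤ i → i < j → R'.leaf (i + 1) = R''.leaf i) ∧
    (∀ i, j < i → R'.leaf i = R''.leaf i)

/-- One step of the traceback: `R'` is a realization of the non-simple profile `m'`
obtained from the realization `R''` of `simpStep m'` by the surgery dictated by the
case (`α = 0`, `α > m₂'` or `0 < α ≤ m₂'`) that produced `simpStep m'` from `m'`. -/
def TraceStep (m' : List ℕ) (R'' R' : LNet) : Prop :=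
  2 ≤ m'.length ∧ ¬ IsSimpleP m' ∧
  ((m'.headI = m'.tail.headI ∧ CherryExpandOp R'' R') ∨
   (m'.tail.headI < m'.headI - m'.tail.headI ∧ AddArcOp R'' R') ∨
   (0 < m'.headI - m'.tail.headI ∧ m'.headI - m'.tail.headI ≤ m'.tail.headI ∧
     InsertBackOp
       ((m'.tail.takeWhile fun y => decide (m'.headI - m'.tail.headI ≤ y)).length)
       R'' R'))

/-- `TracebackFrom core m N`: `N` is a network `N(m)` obtainable by the traceback
through the simplification sequence of `m`, initialized with the core network
`core`. -/
inductive TracebackFrom (core : LNet) : List ℕ → LNet → Prop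
  | base (m : List ℕ) : IsSimpleP m → TracebackFrom core m core
  | step (m' : List ℕ) (R'' R' : LNet) :
      TracebackFrom core (simpStep m') R'' → TraceStep m' R'' R' →
      TracebackFrom core m' R'

/-! ### Tree-based and tree-child networks -/

def subIn (G : Net) (A : Finset ℕ) (v : ℕ) : ℕ := (A.filter fun a => G.tgt a = v).card
def subOut (G : Net) (A : Finset ℕ) (v : ℕ) : ℕ := (A.filter fun a => G.src a = v).card

/-- `G` is tree-based: some subset `A` of its arcs forms a spanning subdivision of a
rooted phylogenetic tree (with one extra incoming arc added to its root) whose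
leaves are exactly the leaves of `G`; all remaining arcs of `G` join subdivision
vertices, and every subdivision vertex has total degree 3 in `G`. -/
def IsTreeBased (G : Net) : Prop :=
  ∃ A : Finset ℕ, A ⊆ G.arcs ∧
    (∃! r, r ∈ G.verts ∧ subIn G A r = 0) ∧
    (∀ r ∈ G.verts, subIn G A r = 0 → subOut G A r = 1) ∧
    (∀ v ∈ G.verts,
        (subIn G A v = 0 ∧ subOut G A v = 1) ∨ (subIn G A v = 1 ∧ subOut G A v = 0) ∨
        (subIn G A v = 1 ∧ subOut G A v = 1) ∨ (subIn G A v = 1 ∧ subOut G A v = 2)) ∧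
    (∀ v ∈ G.verts, subIn G A v = 1 → subOut G A v = 0 → IsLeafN G v) ∧
    (∀ v, IsLeafN G v → subIn G A v = 1 ∧ subOut G A v = 0) ∧
    (∀ a ∈ G.arcs, a ∉ A →
        subIn G A (G.src a) = 1 ∧ subOut G A (G.src a) = 1 ∧
        subIn G A (G.tgt a) = 1 ∧ subOut G A (G.tgt a) = 1) ∧
    (∀ v ∈ G.verts, subIn G A v = 1 → subOut G A v = 1 → inDeg G v + outDeg G v = 3)

/-- `G` is tree-child (reticulation vertices contained in beads being ignored):
every vertex has a directed path to a leaf on which every vertex except possibly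
the first one is either not a reticulation vertex or is contained in a bead. -/
def IsTreeChild (G : Net) : Prop :=
  ∀ v ∈ G.verts, ∃ (l : List ℕ) (w : ℕ), IsWalk G l v w ∧ IsLeafN G w ∧
    ∀ a ∈ l, IsReticN G (G.tgt a) → InBead G (G.tgt a)

/-! ### Multiple-labelled networks and the split operation -/

/-- A multiple-labelled network: a network together with a labelling map assigning
to each leaf vertex the (0-based) position of the profile component it is labelled
with; distinct leaves may carry the same label. -/
structure MLNet where
  net : Net
  lab : ℕ → ℕ

/-- A multiple-labelled tree: a multiple-labelled network without reticulation
vertices. -/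
def IsMLTree (R : MLNet) : Prop := ∀ v, ¬ IsReticN R.net v

/-- The multiple-labelled network `R` realizes the ploidy profile `m`: for every
position `i` of `m`, the total number of directed paths from the root to leaves
labelled `i` equals the `i`-th component of `m`. -/
def MLRealizes (R : MLNet) (m : List ℕ) : Prop :=
  IsPhylo R.net ∧
  (∀ v, IsLeafN R.net v → R.lab v < m.length) ∧
  (∀ i < m.length, ∀ r, IsRootN R.net r →
      (∑ v ∈ R.net.verts.filter (fun v => IsLeafN R.net v ∧ R.lab v = i),
          nPaths R.net r v) = m.getD i 0)

/-- The arcs of the subgraph induced by the vertices below `c`. -/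
def arcsBelow (G : Net) (c : ℕ) : Set ℕ :=
  {b | b ∈ G.arcs ∧ BelowV G c (G.src b) ∧ BelowV G c (G.tgt b)}

/-- `a` is a cut-arc of `G`: removing it disconnects its end vertices in the
underlying undirected graph. -/
def IsCutArc (G : Net) (a : ℕ) : Prop :=
  a ∈ G.arcs ∧
    ¬ Relation.ReflTransGen
        (fun x y => ∃ b ∈ G.arcs, b ≠ a ∧
          ((G.src b = x ∧ G.tgt b = y) ∨ (G.src b = y ∧ G.tgt b = x)))
        (G.src a) (G.tgt a)

/-- The split operation: `R'` is obtained from `R` by deleting a reticulation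
vertex `h` (with parents `p₁, p₂` and child `c`, where `(h,c)` is a cut-arc)
together with its three incident arcs, making a disjoint copy (via `φ` on vertices
and `ψ` on arcs) of the subgraph induced by the vertices below `c`, and attaching
one copy of `c` to `p₁` by an arc `(p₁,c)` and the other to `p₂` by an arc
`(p₂,c)`. -/
def SplitRel (R R' : MLNet) : Prop :=
  ∃ (h p1 p2 c a0 a1 a2 : ℕ) (φ ψ : ℕ → ℕ),
    IsReticN R.net h ∧
    ArcFT R.net a0 h c ∧ IsCutArc R.net a0 ∧
    ArcFT R.net a1 p1 h ∧ ArcFT R.net a2 p2 h ∧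
    a1 ≠ a2 ∧ a0 ≠ a1 ∧ a0 ≠ a2 ∧
    Set.InjOn φ {w | BelowV R.net c w} ∧
    (∀ w, BelowV R.net c w → φ w ∉ R.net.verts) ∧
    Set.InjOn ψ (arcsBelow R.net c) ∧
    (∀ b ∈ arcsBelow R.net c, ψ b ∉ R.net.arcs) ∧
    (↑R'.net.verts : Set ℕ) =
      ((↑R.net.verts : Set ℕ) \ {h}) ∪ (φ '' {w | BelowV R.net c w}) ∧
    (↑R'.net.arcs : Set ℕ) =
      ((↑R.net.arcs : Set ℕ) \ {a0}) ∪ (ψ '' arcsBelow R.net c) ∧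
    (∀ b ∈ R.net.arcs, b ≠ a0 → b ≠ a1 → b ≠ a2 →
        R'.net.src b = R.net.src b ∧ R'.net.tgt b = R.net.tgt b) ∧
    R'.net.src a1 = p1 ∧ R'.net.tgt a1 = c ∧
    R'.net.src a2 = p2 ∧ R'.net.tgt a2 = φ c ∧
    (∀ b ∈ arcsBelow R.net c,
        R'.net.src (ψ b) = φ (R.net.src b) ∧ R'.net.tgt (ψ b) = φ (R.net.tgt b)) ∧
    (∀ v ∈ R.net.verts, v ≠ h → R'.lab v = R.lab v) ∧
    (∀ w, BelowV R.net c w → R'.lab (φ w) = R.lab w)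

/-- Adjacency in ploidy profile space `𝒫(m)` (relative to an edit distance `D` on
multiple-labelled trees): both endpoints realize `m` and either one is obtained
from the other by a single split operation, or both are multiple-labelled trees at
`D`-distance 1. -/
def PEdge (m : List ℕ) (D : MLNet → MLNet → ℕ) (A B : MLNet) : Prop :=
  MLRealizes A m ∧ MLRealizes B m ∧
    (SplitRel A B ∨ SplitRel B A ∨ (IsMLTree A ∧ IsMLTree B ∧ D A B = 1))

/-!
Let `B` be the set of vertices below `c`. Since `(h, c)` is a cut-arc, `a0` is the only arc
entering `B`, so a root path to a vertex `x ∈ B` is a path to `p₁` or `p₂`, followed by `h`, `c`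
and a path inside `B`. The split sends those through `p₁` to `x` and those through `p₂` to the
copy `φ x`, and leaves the paths to vertices outside `B ∪ {h}` alone; hence the path counts
summed over each label are unchanged. Every vertex of `N'` keeps the degrees of the vertex of
`N` it comes from, and folding the copy back onto `B` turns every arc of `N'` into a strict
increase of the number of ancestors in `N`, so `N'` is again acyclic.
-/

open Relation

variable {G G' : Net} {l l₁ l₂ : List ℕ} {a b e r u v w x : ℕ}

namespace IsWalk

lemma append (h₁ : IsWalk G l₁ u w) (h₂ : IsWalk G l₂ w v) : IsWalk G (l₁ ++ l₂) u v := by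
  induction l₁ generalizing u with
  | nil => obtain ⟨rfl, -⟩ := h₁; exact h₂
  | cons a t ih => exact ⟨h₁.1, h₁.2.1, ih h₁.2.2⟩

lemma end_mem (hw : IsWalk G l u v) : v ∈ G.verts := by
  induction l generalizing u with
  | nil => exact hw.1 ▸ hw.2
  | cons a t ih => exact ih hw.2.2

lemma start_mem (hsrc : ∀ a ∈ G.arcs, G.src a ∈ G.verts) (hw : IsWalk G l u v) :
    u ∈ G.verts := by
  cases l with
  | nil => exact hw.1 ▸ hw.2
  | cons a t => exact hw.2.1 ▸ hsrc a hw.1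

lemma arcs_mem (hw : IsWalk G l u v) : ∀ a ∈ l, a ∈ G.arcs := by
  induction l generalizing u with
  | nil => simp
  | cons b t ih => exact List.forall_mem_cons.2 ⟨hw.1, ih hw.2.2⟩

lemma of_append (hsrc : ∀ a ∈ G.arcs, G.src a ∈ G.verts) (hw : IsWalk G (l₁ ++ l₂) u v) :
    ∃ w, IsWalk G l₁ u w ∧ IsWalk G l₂ w v := by
  induction l₁ generalizing u with
  | nil => exact ⟨u, ⟨rfl, hw.start_mem hsrc⟩, hw⟩
  | cons a t ih =>
    obtain ⟨w, h₁, h₂⟩ := ih hw.2.2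
    exact ⟨w, ⟨hw.1, hw.2.1, h₁⟩, h₂⟩

lemma below_of_mem (hsrc : ∀ a ∈ G.arcs, G.src a ∈ G.verts) (hw : IsWalk G l u v)
    (ha : a ∈ l) : BelowV G u (G.src a) ∧ BelowV G (G.tgt a) v := by
  obtain ⟨l₁, l₂, rfl⟩ := List.append_of_mem ha
  obtain ⟨w, h₁, h₂⟩ := hw.of_append hsrc
  exact ⟨⟨l₁, h₂.2.1 ▸ h₁⟩, ⟨l₂, h₂.2.2⟩⟩

lemma mem_of_upward {S : Set ℕ} (hS : ∀ a ∈ G.arcs, G.tgt a ∈ S → G.src a ∈ S)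
    (hw : IsWalk G l u v) (hv : v ∈ S) : u ∈ S ∧ ∀ a ∈ l, G.tgt a ∈ S := by
  induction l generalizing u with
  | nil => exact ⟨hw.1 ▸ hv, by simp⟩
  | cons a t ih =>
    obtain ⟨ht, hl⟩ := ih hw.2.2
    exact ⟨hw.2.1 ▸ hS a hw.1 ht, List.forall_mem_cons.2 ⟨ht, hl⟩⟩

lemma mem_of_downward {S : Set ℕ} (hS : ∀ a ∈ G.arcs, G.src a ∈ S → G.tgt a ∈ S)
    (hw : IsWalk G l u v) (hu : u ∈ S) : v ∈ S ∧ ∀ a ∈ l, G.src a ∈ S := by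
  induction l generalizing u with
  | nil => exact ⟨hw.1 ▸ hu, by simp⟩
  | cons a t ih =>
    have ha : G.src a ∈ S := hw.2.1 ▸ hu
    obtain ⟨hv, hl⟩ := ih hw.2.2 (hS a hw.1 ha)
    exact ⟨hv, List.forall_mem_cons.2 ⟨ha, hl⟩⟩

lemma exists_mem_enter {S : Set ℕ} (hw : IsWalk G l u v) (hu : u ∉ S) (hv : v ∈ S) :
    ∃ a ∈ l, G.src a ∉ S ∧ G.tgt a ∈ S := by
  induction l generalizing u with
  | nil => exact absurd (hw.1 ▸ hv) hu
  | cons a t ih =>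
    by_cases ht : G.tgt a ∈ S
    · exact ⟨a, List.mem_cons_self, hw.2.1 ▸ hu, ht⟩
    · obtain ⟨b, hb, hbS⟩ := ih hw.2.2 ht
      exact ⟨b, List.mem_cons_of_mem _ hb, hbS⟩

lemma le_of_lt_arcs {f : ℕ → ℕ} (hf : ∀ a ∈ G.arcs, f (G.src a) < f (G.tgt a))
    (hw : IsWalk G l u v) : f u ≤ f v := by
  induction l generalizing u with
  | nil => exact hw.1 ▸ le_rfl
  | cons a t ih => exact hw.2.1 ▸ (hf a hw.1).le.trans (ih hw.2.2)

lemma lt_of_lt_arcs {f : ℕ → ℕ} (hf : ∀ a ∈ G.arcs, f (G.src a) < f (G.tgt a))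
    (hw : IsWalk G l u v) (hl : l ≠ []) : f u < f v := by
  obtain ⟨a, t, rfl⟩ := List.exists_cons_of_ne_nil hl
  exact hw.2.1 ▸ (hf a hw.1).trans_le (hw.2.2.le_of_lt_arcs hf)

end IsWalk

lemma not_isWalk_self_of_lt_arcs (f : ℕ → ℕ) (hf : ∀ a ∈ G.arcs, f (G.src a) < f (G.tgt a))
    (v : ℕ) (l : List ℕ) (hl : l ≠ []) : ¬ IsWalk G l v v :=
  fun hw => (hw.lt_of_lt_arcs hf hl).false

lemma BelowV.trans (h₁ : BelowV G u v) (h₂ : BelowV G v w) : BelowV G u w :=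
  let ⟨_, h₁⟩ := h₁; let ⟨_, h₂⟩ := h₂; ⟨_, h₁.append h₂⟩

lemma BelowV.refl (hu : u ∈ G.verts) : BelowV G u u := ⟨[], rfl, hu⟩

lemma BelowV.of_arc (ha : a ∈ G.arcs) (hv : G.tgt a ∈ G.verts) :
    BelowV G (G.src a) (G.tgt a) :=
  ⟨[a], ha, rfl, rfl, hv⟩

def AdjAvoiding (G : Net) (e x y : ℕ) : Prop :=
  ∃ b ∈ G.arcs, b ≠ e ∧ ((G.src b = x ∧ G.tgt b = y) ∨ (G.src b = y ∧ G.tgt b = x))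

instance : Std.Symm (AdjAvoiding G e) where
  symm _ _ := fun ⟨b, hb, hne, hends⟩ => ⟨b, hb, hne, hends.symm⟩

lemma IsCutArc.not_reflTransGen (he : IsCutArc G e) :
    ¬ ReflTransGen (AdjAvoiding G e) (G.src e) (G.tgt e) :=
  he.2

lemma IsWalk.reflTransGen_adjAvoiding (hw : IsWalk G l u v) (he : e ∉ l) :
    ReflTransGen (AdjAvoiding G e) u v := by
  induction l generalizing u with
  | nil => exact hw.1 ▸ .refl
  | cons a t ih =>
    obtain ⟨ha, rfl, ht⟩ := hw
    exact .head ⟨a, ha, fun h => he (h ▸ List.mem_cons_self), .inl ⟨rfl, rfl⟩⟩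
      (ih ht fun h => he (List.mem_cons_of_mem _ h))

def SameArc (G G' : Net) (a : ℕ) : Prop :=
  a ∈ G.arcs ∧ a ∈ G'.arcs ∧ G'.src a = G.src a ∧ G'.tgt a = G.tgt a

lemma SameArc.symm (h : SameArc G G' a) : SameArc G' G a :=
  ⟨h.2.1, h.1, h.2.2.1.symm, h.2.2.2.symm⟩

lemma IsWalk.of_sameArc (hw : IsWalk G l u v) (hl : ∀ a ∈ l, SameArc G G' a)
    (hv : v ∈ G'.verts) : IsWalk G' l u v := by
  induction l generalizing u with
  | nil => exact ⟨hw.1, hw.1 ▸ hv⟩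
  | cons a t ih =>
    obtain ⟨-, ha, hs, ht⟩ := hl a List.mem_cons_self
    exact ⟨ha, hs ▸ hw.2.1, ht ▸ ih hw.2.2 fun b hb => hl b (List.mem_cons_of_mem _ hb)⟩

lemma vertexType_of_deg_eq {v' : ℕ} (hv' : v' ∈ G'.verts) (hin : inDeg G' v' = inDeg G v)
    (hout : outDeg G' v' = outDeg G v)
    (h : IsRootN G v ∨ IsLeafN G v ∨ IsTreeVert G v ∨ IsReticN G v) :
    IsRootN G' v' ∨ IsLeafN G' v' ∨ IsTreeVert G' v' ∨ IsReticN G' v' := by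
  simp only [IsRootN, IsLeafN, IsTreeVert, IsReticN, hin, hout] at h ⊢
  tauto

lemma _root_.Set.InjOn.list_map {α β : Type*} {f : α → β} {s : Set α} (hf : s.InjOn f) :
    {l : List α | ∀ x ∈ l, x ∈ s}.InjOn (List.map f) := by
  intro l₁ h₁ l₂ h₂ heq
  induction l₁ generalizing l₂ with
  | nil => exact (List.map_eq_nil_iff.1 heq.symm).symm
  | cons a t ih =>
    obtain _ | ⟨b, t'⟩ := l₂
    · simp at heq
    simp only [List.map_cons, List.cons.injEq] at heq
    simp only [Set.mem_ofPred_eq, List.forall_mem_cons] at h₁ h₂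
    rw [hf h₁.1 h₂.1 heq.1, ih h₁.2 h₂.2 heq.2]

def labelledLeaves (G : Net) (lab : ℕ → ℕ) (i : ℕ) : Finset ℕ :=
  G.verts.filter fun v => IsLeafN G v ∧ lab v = i

noncomputable def numAncestors (G : Net) (v : ℕ) : ℕ := {u | BelowV G u v}.ncard

namespace IsPhylo

variable (hG : IsPhylo G)
include hG

lemma numAncestors_src_lt (ha : a ∈ G.arcs) :
    numAncestors G (G.src a) < numAncestors G (G.tgt a) := by
  have htgt := hG.tgt_mem a ha
  refine Set.ncard_lt_ncard ?_ (G.verts.finite_toSet.subset fun u ⟨_, hu⟩ =>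
    hu.start_mem hG.src_mem)
  refine (Set.ssubset_iff_of_subset fun u hu => hu.trans (.of_arc ha htgt)).2
    ⟨G.tgt a, .refl htgt, fun ⟨l, hl⟩ => ?_⟩
  exact hG.acyclic _ (l ++ [a]) (by simp) (hl.append ⟨ha, rfl, rfl, htgt⟩)

lemma below_of_isRootN (hr : IsRootN G r) (hv : v ∈ G.verts) : BelowV G r v := by
  induction hn : numAncestors G v using Nat.strong_induction_on generalizing v with
  | _ n ih =>
  by_cases hv0 : inDeg G v = 0
  · obtain ⟨r₀, -, huniq⟩ := hG.root_exu
    rw [huniq v ⟨hv, hv0⟩, ← huniq r hr]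
    exact .refl hr.1
  · obtain ⟨a, ha'⟩ := Finset.card_pos.1 (Nat.pos_of_ne_zero hv0)
    obtain ⟨ha, rfl⟩ := Finset.mem_filter.1 ha'
    exact (ih _ (hn ▸ hG.numAncestors_src_lt ha) (hG.src_mem a ha) rfl).trans (.of_arc ha hv)

lemma nodup_of_isWalk (hw : IsWalk G l u v) : l.Nodup := by
  induction l generalizing u with
  | nil => exact List.nodup_nil
  | cons a t ih =>
    refine List.nodup_cons.2 ⟨fun hat => ?_, ih hw.2.2⟩
    obtain ⟨⟨_, hback⟩, -⟩ := hw.2.2.below_of_mem hG.src_mem hat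
    exact (hG.numAncestors_src_lt hw.1).not_ge (hback.le_of_lt_arcs fun _ => hG.numAncestors_src_lt)

lemma finite_walks (u v : ℕ) : {l | IsWalk G l u v}.Finite := by
  refine (G.arcs.toList.sublists.flatMap List.permutations).finite_toSet.subset fun l hl => ?_
  obtain ⟨l', hperm, hsub⟩ := List.subperm_of_subset (hG.nodup_of_isWalk hl)
    fun a ha => Finset.mem_toList.2 (hl.arcs_mem a ha)
  simp only [List.mem_flatMap, List.mem_sublists, List.mem_permutations]
  exact ⟨l', hsub, hperm.symm⟩

lemma nPaths_eq_mul_of_forall_mem (he : e ∈ G.arcs) (hmem : ∀ l, IsWalk G l u v → e ∈ l) :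
    nPaths G u v = nPaths G u (G.src e) * nPaths G (G.tgt e) v := by
  have hW : {l | IsWalk G l u v} = (fun p : List ℕ × List ℕ => p.1 ++ e :: p.2) ''
      ({l | IsWalk G l u (G.src e)} ×ˢ {l | IsWalk G l (G.tgt e) v}) := by
    ext l
    refine ⟨fun hl => ?_, ?_⟩
    · obtain ⟨l₁, l₂, rfl⟩ := List.append_of_mem (hmem l hl)
      obtain ⟨w, h₁, h₂⟩ := hl.of_append hG.src_mem
      exact ⟨(l₁, l₂), ⟨h₂.2.1 ▸ h₁, h₂.2.2⟩, rfl⟩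
    · rintro ⟨⟨l₁, l₂⟩, ⟨h₁, h₂⟩, rfl⟩
      exact h₁.append ⟨he, rfl, h₂⟩
  have hinj : Set.InjOn (fun p : List ℕ × List ℕ => p.1 ++ e :: p.2)
      ({l | IsWalk G l u (G.src e)} ×ˢ {l | IsWalk G l (G.tgt e) v}) := by
    rintro ⟨l₁, l₂⟩ ⟨h₁, h₂⟩ ⟨l₁', l₂'⟩ - heq
    have hnd := List.nodup_cons.1 (List.nodup_middle.1 (hG.nodup_of_isWalk
      (h₁.append (show IsWalk G (e :: l₂) _ _ from ⟨he, rfl, h₂⟩))))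
    obtain ⟨rfl, -, rfl⟩ := (List.append_cons_inj_of_notMem
      (fun h => hnd.1 (List.mem_append_left _ h))
      (fun h => hnd.1 (List.mem_append_right _ h))).1 heq
    rfl
  rw [nPaths, hW, hinj.ncard_image, Set.ncard_prod]
  rfl

lemma nPaths_eq_sum_inArcs (huv : u ≠ v) :
    nPaths G u v = ∑ a ∈ G.arcs.filter (fun a => G.tgt a = v), nPaths G u (G.src a) := by
  have hW : {l | IsWalk G l u v} = ⋃ a ∈ (↑(G.arcs.filter fun a => G.tgt a = v) : Set ℕ),
      (· ++ [a]) '' {l | IsWalk G l u (G.src a)} := by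
    ext l
    simp only [Set.mem_ofPred_eq, Set.mem_iUnion, Set.mem_image, Finset.coe_filter,
      exists_prop]
    refine ⟨fun hl => ?_, ?_⟩
    · obtain rfl | ⟨l', a, rfl⟩ := List.eq_nil_or_concat' l
      · exact absurd hl.1 huv
      obtain ⟨w, h₁, h₂⟩ := hl.of_append hG.src_mem
      exact ⟨a, ⟨h₂.1, h₂.2.2.1⟩, l', h₂.2.1 ▸ h₁, rfl⟩
    · rintro ⟨a, ⟨ha, rfl⟩, l', hl', rfl⟩
      exact hl'.append ⟨ha, rfl, rfl, hG.tgt_mem a ha⟩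
  rw [nPaths, hW, Set.Finite.ncard_biUnion (Finset.finite_toSet _)
    (fun a _ => (hG.finite_walks _ _).image _), finsum_mem_coe_finset]
  · exact Finset.sum_congr rfl fun a _ =>
      ((List.append_left_injective [a]).injOn).ncard_image
  · rintro a - b - hab
    refine Set.disjoint_left.2 ?_
    rintro _ ⟨l, -, rfl⟩ ⟨l', -, heq⟩
    exact hab (List.singleton_inj.1 (List.append_inj' heq rfl).2).symm

end IsPhylo

structure SplitData (G G' : Net) where
  h : ℕ
  p1 : ℕ
  p2 : ℕ
  c : ℕ
  a0 : ℕ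
  a1 : ℕ
  a2 : ℕ
  phi : ℕ → ℕ
  psi : ℕ → ℕ
  phylo : IsPhylo G
  retic : IsReticN G h
  arc0 : ArcFT G a0 h c
  cut : IsCutArc G a0
  arc1 : ArcFT G a1 p1 h
  arc2 : ArcFT G a2 p2 h
  ne12 : a1 ≠ a2
  ne01 : a0 ≠ a1
  ne02 : a0 ≠ a2
  injOn_phi : Set.InjOn phi {w | BelowV G c w}
  phi_notMem : ∀ w, BelowV G c w → phi w ∉ G.verts
  injOn_psi : Set.InjOn psi (arcsBelow G c)
  psi_notMem : ∀ b ∈ arcsBelow G c, psi b ∉ G.arcs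
  verts_eq : (↑G'.verts : Set ℕ) = ((↑G.verts : Set ℕ) \ {h}) ∪ (phi '' {w | BelowV G c w})
  arcs_eq : (↑G'.arcs : Set ℕ) = ((↑G.arcs : Set ℕ) \ {a0}) ∪ (psi '' arcsBelow G c)
  keep : ∀ b ∈ G.arcs, b ≠ a0 → b ≠ a1 → b ≠ a2 → G'.src b = G.src b ∧ G'.tgt b = G.tgt b
  src_a1 : G'.src a1 = p1
  tgt_a1 : G'.tgt a1 = c
  src_a2 : G'.src a2 = p2
  tgt_a2 : G'.tgt a2 = phi c
  psi_ends : ∀ b ∈ arcsBelow G c,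
      G'.src (psi b) = phi (G.src b) ∧ G'.tgt (psi b) = phi (G.tgt b)

namespace SplitData

-- Primed names refer to the split network `G'`.
variable (D : SplitData G G')

def B : Set ℕ := {w | BelowV G D.c w}

lemma c_mem : D.c ∈ G.verts := D.arc0.2.2 ▸ D.phylo.tgt_mem D.a0 D.arc0.1

lemma c_mem_B : D.c ∈ D.B := .refl D.c_mem

lemma mem_verts_of_mem_B (hw : w ∈ D.B) : w ∈ G.verts := hw.choose_spec.end_mem

lemma phi_notMem_verts (hw : w ∈ D.B) : D.phi w ∉ G.verts := D.phi_notMem w hw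

lemma h_notMem_B : D.h ∉ D.B := fun ⟨l, hl⟩ =>
  D.phylo.acyclic D.c (l ++ [D.a0]) (by simp)
    (hl.append ⟨D.arc0.1, D.arc0.2.1, D.arc0.2.2, D.phylo.tgt_mem _ D.arc0.1⟩)

lemma tgt_mem_B (hb : b ∈ G.arcs) (hs : G.src b ∈ D.B) : G.tgt b ∈ D.B :=
  BelowV.trans hs (.of_arc hb (D.phylo.tgt_mem b hb))

lemma p1_notMem_B : D.p1 ∉ D.B := fun hp =>
  D.h_notMem_B (D.arc1.2.2 ▸ D.tgt_mem_B D.arc1.1 (D.arc1.2.1 ▸ hp))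

lemma p2_notMem_B : D.p2 ∉ D.B := fun hp =>
  D.h_notMem_B (D.arc2.2.2 ▸ D.tgt_mem_B D.arc2.1 (D.arc2.2.1 ▸ hp))

lemma p1_mem : D.p1 ∈ G.verts := D.arc1.2.1 ▸ D.phylo.src_mem D.a1 D.arc1.1

lemma p2_mem : D.p2 ∈ G.verts := D.arc2.2.1 ▸ D.phylo.src_mem D.a2 D.arc2.1

lemma p1_ne_h : D.p1 ≠ D.h := fun he =>
  D.phylo.no_loop D.a1 D.arc1.1 (by rw [D.arc1.2.1, D.arc1.2.2, he])

lemma p2_ne_h : D.p2 ≠ D.h := fun he =>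
  D.phylo.no_loop D.a2 D.arc2.1 (by rw [D.arc2.2.1, D.arc2.2.2, he])

lemma inArcs_h : G.arcs.filter (G.tgt · = D.h) = {D.a1, D.a2} := by
  refine (Finset.eq_of_subset_of_card_le (fun b hb => ?_) ?_).symm
  · rcases Finset.mem_insert.1 hb with rfl | hb
    · exact Finset.mem_filter.2 ⟨D.arc1.1, D.arc1.2.2⟩
    · exact Finset.mem_filter.2 (Finset.mem_singleton.1 hb ▸ ⟨D.arc2.1, D.arc2.2.2⟩)
  · rw [Finset.card_pair D.ne12]
    exact D.retic.2.1.le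

lemma src_ne_h (hb : b ∈ G.arcs) (hne : b ≠ D.a0) : G.src b ≠ D.h := fun hs => by
  obtain ⟨a, ha⟩ := Finset.card_eq_one.1 D.retic.2.2
  have hmem : ∀ x ∈ G.arcs, G.src x = D.h → x = a := fun x hx hxs =>
    Finset.mem_singleton.1 (ha ▸ Finset.mem_filter.2 ⟨hx, hxs⟩)
  exact hne ((hmem b hb hs).trans (hmem D.a0 D.arc0.1 D.arc0.2.1).symm)

lemma tgt_ne_h (hb : b ∈ G.arcs) (h1 : b ≠ D.a1) (h2 : b ≠ D.a2) : G.tgt b ≠ D.h := fun ht => by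
  have := D.inArcs_h ▸ Finset.mem_filter.2 ⟨hb, ht⟩
  simp only [Finset.mem_insert, Finset.mem_singleton] at this
  tauto

lemma below_of_a0_mem (hw : IsWalk G l u v) (h0 : D.a0 ∈ l) :
    BelowV G u D.h ∧ v ∈ D.B := by
  have := hw.below_of_mem D.phylo.src_mem h0
  rwa [D.arc0.2.1, D.arc0.2.2] at this

lemma root_notMem_B (hr : IsRootN G r) : r ∉ D.B := fun hrB =>
  D.h_notMem_B (hrB.trans (D.phylo.below_of_isRootN hr D.retic.1))

lemma root_ne_h (hr : IsRootN G r) : r ≠ D.h := fun he =>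
  two_ne_zero (D.retic.2.1.symm.trans (he ▸ hr.2))

/-- Otherwise `h` and `c` would be joined avoiding the cut-arc `a0`, through
`h — r — src b — tgt b — c` for a root `r`. -/
lemma src_mem_B (hb : b ∈ G.arcs) (hne : b ≠ D.a0) (ht : G.tgt b ∈ D.B) :
    G.src b ∈ D.B := by
  by_contra hs
  obtain ⟨r, hr, -⟩ := D.phylo.root_exu
  obtain ⟨lh, hlh⟩ := D.phylo.below_of_isRootN hr D.retic.1
  obtain ⟨ls, hls⟩ := D.phylo.below_of_isRootN hr (D.phylo.src_mem b hb)
  obtain ⟨lt, hlt⟩ := ht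
  have hrh := hlh.reflTransGen_adjAvoiding fun h0 =>
    D.h_notMem_B (D.below_of_a0_mem hlh h0).2
  have hrs := hls.reflTransGen_adjAvoiding fun h0 => hs (D.below_of_a0_mem hls h0).2
  have hct := hlt.reflTransGen_adjAvoiding fun h0 =>
    D.h_notMem_B (D.below_of_a0_mem hlt h0).1
  have hst : ReflTransGen (AdjAvoiding G D.a0) (G.src b) (G.tgt b) :=
    .single ⟨b, hb, hne, .inl ⟨rfl, rfl⟩⟩
  apply D.cut.not_reflTransGen
  rw [D.arc0.2.1, D.arc0.2.2]
  exact (symm hrh).trans (hrs.trans (hst.trans (symm hct)))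

lemma inArcs_c : G.arcs.filter (G.tgt · = D.c) = {D.a0} := by
  ext b
  refine ⟨fun hb => ?_, fun hb => ?_⟩
  · obtain ⟨hb, ht⟩ := Finset.mem_filter.1 hb
    by_contra hne
    obtain ⟨l, hl⟩ := D.src_mem_B hb (Finset.mem_singleton.not.1 hne) (ht ▸ D.c_mem_B)
    exact D.phylo.acyclic D.c (l ++ [b]) (by simp) (hl.append ⟨hb, rfl, ht, ht ▸ D.c_mem⟩)
  · exact Finset.mem_singleton.1 hb ▸ Finset.mem_filter.2 ⟨D.arc0.1, D.arc0.2.2⟩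

lemma mem_arcsBelow (hb : b ∈ G.arcs) (hs : G.src b ∈ D.B) : b ∈ arcsBelow G D.c :=
  ⟨hb, hs, D.tgt_mem_B hb hs⟩

lemma mem_arcsBelow_of_tgt (hb : b ∈ G.arcs) (hne : b ≠ D.a0) (ht : G.tgt b ∈ D.B) :
    b ∈ arcsBelow G D.c :=
  ⟨hb, D.src_mem_B hb hne ht, ht⟩

lemma mem_verts' : v ∈ G'.verts ↔ (v ∈ G.verts ∧ v ≠ D.h) ∨ ∃ w ∈ D.B, D.phi w = v := by
  simpa [B] using Set.ext_iff.1 D.verts_eq v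

lemma mem_arcs' :
    e ∈ G'.arcs ↔ (e ∈ G.arcs ∧ e ≠ D.a0) ∨ ∃ b ∈ arcsBelow G D.c, D.psi b = e := by
  simpa using Set.ext_iff.1 D.arcs_eq e

lemma mem_verts'_of_mem (hv : v ∈ G.verts) (hvh : v ≠ D.h) : v ∈ G'.verts :=
  D.mem_verts'.2 (.inl ⟨hv, hvh⟩)

lemma phi_mem_verts' (hw : w ∈ D.B) : D.phi w ∈ G'.verts :=
  D.mem_verts'.2 (.inr ⟨w, hw, rfl⟩)

lemma mem_arcs'_of_mem (hb : b ∈ G.arcs) (hne : b ≠ D.a0) : b ∈ G'.arcs :=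
  D.mem_arcs'.2 (.inl ⟨hb, hne⟩)

lemma psi_mem_arcs' (hb : b ∈ arcsBelow G D.c) : D.psi b ∈ G'.arcs :=
  D.mem_arcs'.2 (.inr ⟨b, hb, rfl⟩)

lemma src'_eq (hb : b ∈ G.arcs) (hne : b ≠ D.a0) : G'.src b = G.src b := by
  by_cases h1 : b = D.a1
  · rw [h1, D.src_a1, D.arc1.2.1]
  by_cases h2 : b = D.a2
  · rw [h2, D.src_a2, D.arc2.2.1]
  exact (D.keep b hb hne h1 h2).1

lemma sameArc_of_ne (hb : b ∈ G.arcs) (h0 : b ≠ D.a0) (h1 : b ≠ D.a1) (h2 : b ≠ D.a2) :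
    SameArc G G' b :=
  ⟨hb, D.mem_arcs'_of_mem hb h0, D.keep b hb h0 h1 h2⟩

lemma arc_cases (he : e ∈ G'.arcs) :
    e = D.a1 ∨ e = D.a2 ∨ (SameArc G G' e ∧ e ≠ D.a0 ∧ e ≠ D.a1 ∧ e ≠ D.a2) ∨
      ∃ b ∈ arcsBelow G D.c, e = D.psi b := by
  rcases D.mem_arcs'.1 he with ⟨hb, h0⟩ | ⟨b, hb, rfl⟩
  · by_cases h1 : e = D.a1
    · exact .inl h1
    by_cases h2 : e = D.a2
    · exact .inr (.inl h2)
    exact .inr (.inr (.inl ⟨D.sameArc_of_ne hb h0 h1 h2, h0, h1, h2⟩))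
  · exact .inr (.inr (.inr ⟨b, hb, rfl⟩))

/-- Folds the copy of the subnetwork below `c` back onto the original. -/
noncomputable def fold (v : ℕ) : ℕ :=
  open Classical in if v ∈ D.phi '' D.B then Function.invFunOn D.phi D.B v else v

lemma fold_phi (hw : w ∈ D.B) : D.fold (D.phi w) = w := by
  rw [fold, if_pos (Set.mem_image_of_mem _ hw)]
  exact D.injOn_phi.leftInvOn_invFunOn hw

lemma fold_of_mem (hv : v ∈ G.verts) : D.fold v = v := by
  rw [fold, if_neg]
  rintro ⟨w, hw, rfl⟩
  exact D.phi_notMem_verts hw hv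

lemma numAncestors_fold_lt (he : e ∈ G'.arcs) :
    numAncestors G (D.fold (G'.src e)) < numAncestors G (D.fold (G'.tgt e)) := by
  have hG := D.phylo
  have hlt : ∀ {a p q}, ArcFT G a p q → numAncestors G p < numAncestors G q :=
    fun ⟨ha, hs, ht⟩ => hs ▸ ht ▸ hG.numAncestors_src_lt ha
  rcases D.arc_cases he with rfl | rfl | ⟨⟨hb, -, hs, ht⟩, -⟩ | ⟨b, hb, rfl⟩
  · rw [D.src_a1, D.tgt_a1, D.fold_of_mem D.p1_mem, D.fold_of_mem D.c_mem]
    exact (hlt D.arc1).trans (hlt D.arc0)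
  · rw [D.src_a2, D.tgt_a2, D.fold_of_mem D.p2_mem, D.fold_phi D.c_mem_B]
    exact (hlt D.arc2).trans (hlt D.arc0)
  · rw [hs, ht, D.fold_of_mem (hG.src_mem e hb), D.fold_of_mem (hG.tgt_mem e hb)]
    exact hG.numAncestors_src_lt hb
  · rw [(D.psi_ends b hb).1, (D.psi_ends b hb).2, D.fold_phi hb.2.1, D.fold_phi hb.2.2]
    exact hG.numAncestors_src_lt hb.1

include D in
lemma src_mem' (he : e ∈ G'.arcs) : G'.src e ∈ G'.verts := by
  rcases D.arc_cases he with rfl | rfl | ⟨⟨hb, -, hs, -⟩, h0, -⟩ | ⟨b, hb, rfl⟩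
  · exact D.src_a1 ▸ D.mem_verts'_of_mem D.p1_mem D.p1_ne_h
  · exact D.src_a2 ▸ D.mem_verts'_of_mem D.p2_mem D.p2_ne_h
  · exact hs ▸ D.mem_verts'_of_mem (D.phylo.src_mem e hb) (D.src_ne_h hb h0)
  · exact (D.psi_ends b hb).1 ▸ D.phi_mem_verts' hb.2.1

include D in
lemma tgt_mem' (he : e ∈ G'.arcs) : G'.tgt e ∈ G'.verts := by
  rcases D.arc_cases he with rfl | rfl | ⟨⟨hb, -, -, ht⟩, -, h1, h2⟩ | ⟨b, hb, rfl⟩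
  · exact D.tgt_a1 ▸ D.mem_verts'_of_mem D.c_mem fun h => D.h_notMem_B (h ▸ D.c_mem_B)
  · exact D.tgt_a2 ▸ D.phi_mem_verts' D.c_mem_B
  · exact ht ▸ D.mem_verts'_of_mem (D.phylo.tgt_mem e hb) (D.tgt_ne_h hb h1 h2)
  · exact (D.psi_ends b hb).2 ▸ D.phi_mem_verts' hb.2.2

include D in
lemma no_loop' (he : e ∈ G'.arcs) : G'.src e ≠ G'.tgt e := by
  rcases D.arc_cases he with rfl | rfl | ⟨⟨hb, -, hs, ht⟩, -⟩ | ⟨b, hb, rfl⟩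
  · rw [D.src_a1, D.tgt_a1]
    exact fun h => D.p1_notMem_B (h ▸ D.c_mem_B)
  · rw [D.src_a2, D.tgt_a2]
    exact fun h => D.phi_notMem_verts D.c_mem_B (h ▸ D.p2_mem)
  · rw [hs, ht]
    exact D.phylo.no_loop e hb
  · rw [(D.psi_ends b hb).1, (D.psi_ends b hb).2]
    exact fun h => D.phylo.no_loop b hb.1 (D.injOn_phi hb.2.1 hb.2.2 h)

lemma inArcs'_of_ne (hv : v ∈ G.verts) (hvh : v ≠ D.h) (hvc : v ≠ D.c) :
    G'.arcs.filter (G'.tgt · = v) = G.arcs.filter (G.tgt · = v) := by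
  ext e
  simp only [Finset.mem_filter]
  refine ⟨fun ⟨he, hev⟩ => ?_, fun ⟨hb, hev⟩ => ?_⟩
  · subst hev
    rcases D.arc_cases he with rfl | rfl | ⟨⟨hb, -, -, ht⟩, -⟩ | ⟨b, hb, rfl⟩
    · exact absurd D.tgt_a1 hvc
    · exact absurd (D.tgt_a2 ▸ hv) (D.phi_notMem_verts D.c_mem_B)
    · exact ⟨hb, ht.symm⟩
    · exact absurd ((D.psi_ends b hb).2 ▸ hv) (D.phi_notMem_verts hb.2.2)
  · have h0 : e ≠ D.a0 := fun h => hvc (by rw [← hev, h, D.arc0.2.2])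
    have h1 : e ≠ D.a1 := fun h => hvh (by rw [← hev, h, D.arc1.2.2])
    have h2 : e ≠ D.a2 := fun h => hvh (by rw [← hev, h, D.arc2.2.2])
    exact ⟨D.mem_arcs'_of_mem hb h0, (D.keep e hb h0 h1 h2).2 ▸ hev⟩

lemma inArcs'_c : G'.arcs.filter (G'.tgt · = D.c) = {D.a1} := by
  ext e
  simp only [Finset.mem_filter, Finset.mem_singleton]
  refine ⟨fun ⟨he, hec⟩ => ?_, fun h => h ▸ ⟨D.mem_arcs'_of_mem D.arc1.1 D.ne01.symm, D.tgt_a1⟩⟩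
  rcases D.arc_cases he with rfl | rfl | ⟨⟨hb, -, -, ht⟩, h0, -⟩ | ⟨b, hb, rfl⟩
  · rfl
  · exact absurd (D.tgt_a2 ▸ hec ▸ D.c_mem) (D.phi_notMem_verts D.c_mem_B)
  · exact absurd (Finset.mem_singleton.1 (D.inArcs_c ▸ Finset.mem_filter.2 ⟨hb, ht ▸ hec⟩)) h0
  · exact absurd ((D.psi_ends b hb).2 ▸ hec ▸ D.c_mem) (D.phi_notMem_verts hb.2.2)

lemma inArcs'_phi (hw : w ∈ D.B) (hwc : w ≠ D.c) :
    G'.arcs.filter (G'.tgt · = D.phi w) = (G.arcs.filter (G.tgt · = w)).image D.psi := by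
  ext e
  simp only [Finset.mem_filter, Finset.mem_image]
  refine ⟨fun ⟨he, hew⟩ => ?_, ?_⟩
  · rcases D.arc_cases he with rfl | rfl | ⟨⟨hb, -, -, ht⟩, -⟩ | ⟨b, hb, rfl⟩
    · exact (D.phi_notMem_verts hw (by rw [← hew, D.tgt_a1]; exact D.c_mem)).elim
    · exact absurd (D.injOn_phi D.c_mem_B hw (D.tgt_a2 ▸ hew)).symm hwc
    · exact absurd (hew ▸ ht ▸ D.phylo.tgt_mem e hb) (D.phi_notMem_verts hw)
    · exact ⟨b, ⟨hb.1, D.injOn_phi hb.2.2 hw ((D.psi_ends b hb).2 ▸ hew)⟩, rfl⟩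
  · rintro ⟨b, ⟨hb, rfl⟩, rfl⟩
    have hbB := D.mem_arcsBelow_of_tgt hb (fun h => hwc (h ▸ D.arc0.2.2)) hw
    exact ⟨D.psi_mem_arcs' hbB, (D.psi_ends b hbB).2⟩

lemma inArcs'_phi_c : G'.arcs.filter (G'.tgt · = D.phi D.c) = {D.a2} := by
  ext e
  simp only [Finset.mem_filter, Finset.mem_singleton]
  refine ⟨fun ⟨he, hec⟩ => ?_, fun h => h ▸ ⟨D.mem_arcs'_of_mem D.arc2.1 D.ne02.symm, D.tgt_a2⟩⟩
  rcases D.arc_cases he with rfl | rfl | ⟨⟨hb, -, -, ht⟩, -⟩ | ⟨b, hb, rfl⟩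
  · exact absurd (hec ▸ D.tgt_a1 ▸ D.c_mem) (D.phi_notMem_verts D.c_mem_B)
  · rfl
  · exact absurd (hec ▸ ht ▸ D.phylo.tgt_mem e hb) (D.phi_notMem_verts D.c_mem_B)
  · have hbc := D.injOn_phi hb.2.2 D.c_mem_B ((D.psi_ends b hb).2 ▸ hec)
    have := D.inArcs_c ▸ Finset.mem_filter.2 ⟨hb.1, hbc⟩
    exact absurd hb.2.1 (Finset.mem_singleton.1 this ▸ D.arc0.2.1 ▸ D.h_notMem_B)

lemma outArcs'_of_ne (hv : v ∈ G.verts) (hvh : v ≠ D.h) :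
    G'.arcs.filter (G'.src · = v) = G.arcs.filter (G.src · = v) := by
  ext e
  simp only [Finset.mem_filter]
  refine ⟨fun ⟨he, hev⟩ => ?_, fun ⟨hb, hev⟩ => ?_⟩
  · rcases D.mem_arcs'.1 he with ⟨hb, h0⟩ | ⟨b, hb, rfl⟩
    · exact ⟨hb, D.src'_eq hb h0 ▸ hev⟩
    · exact absurd ((D.psi_ends b hb).1 ▸ hev ▸ hv) (D.phi_notMem_verts hb.2.1)
  · have h0 : e ≠ D.a0 := fun h => hvh (by rw [← hev, h, D.arc0.2.1])
    exact ⟨D.mem_arcs'_of_mem hb h0, D.src'_eq hb h0 ▸ hev⟩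

lemma outArcs'_phi (hw : w ∈ D.B) :
    G'.arcs.filter (G'.src · = D.phi w) = (G.arcs.filter (G.src · = w)).image D.psi := by
  ext e
  simp only [Finset.mem_filter, Finset.mem_image]
  refine ⟨fun ⟨he, hew⟩ => ?_, ?_⟩
  · rcases D.mem_arcs'.1 he with ⟨hb, h0⟩ | ⟨b, hb, rfl⟩
    · exact absurd (hew ▸ D.src'_eq hb h0 ▸ D.phylo.src_mem e hb) (D.phi_notMem_verts hw)
    · exact ⟨b, ⟨hb.1, D.injOn_phi hb.2.1 hw ((D.psi_ends b hb).1 ▸ hew)⟩, rfl⟩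
  · rintro ⟨b, ⟨hb, rfl⟩, rfl⟩
    have hbB := D.mem_arcsBelow hb hw
    exact ⟨D.psi_mem_arcs' hbB, (D.psi_ends b hbB).1⟩

lemma inDeg'_of_mem (hv : v ∈ G.verts) (hvh : v ≠ D.h) : inDeg G' v = inDeg G v := by
  by_cases hvc : v = D.c
  · rw [inDeg, inDeg, hvc, D.inArcs'_c, D.inArcs_c, Finset.card_singleton,
      Finset.card_singleton]
  · rw [inDeg, inDeg, D.inArcs'_of_ne hv hvh hvc]

lemma outDeg'_of_mem (hv : v ∈ G.verts) (hvh : v ≠ D.h) : outDeg G' v = outDeg G v := by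
  rw [outDeg, outDeg, D.outArcs'_of_ne hv hvh]

lemma inDeg'_phi (hw : w ∈ D.B) : inDeg G' (D.phi w) = inDeg G w := by
  by_cases hwc : w = D.c
  · rw [inDeg, inDeg, hwc, D.inArcs'_phi_c, D.inArcs_c, Finset.card_singleton,
      Finset.card_singleton]
  · rw [inDeg, inDeg, D.inArcs'_phi hw hwc, Finset.card_image_of_injOn]
    intro x hx y hy
    obtain ⟨hx, hxw⟩ := Finset.mem_filter.1 hx
    obtain ⟨hy, hyw⟩ := Finset.mem_filter.1 hy
    have hne : ∀ {z}, G.tgt z = w → z ≠ D.a0 := fun hz h => hwc (hz ▸ h ▸ D.arc0.2.2)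
    exact D.injOn_psi (D.mem_arcsBelow_of_tgt hx (hne hxw) (hxw ▸ hw))
      (D.mem_arcsBelow_of_tgt hy (hne hyw) (hyw ▸ hw))

lemma outDeg'_phi (hw : w ∈ D.B) : outDeg G' (D.phi w) = outDeg G w := by
  rw [outDeg, outDeg, D.outArcs'_phi hw, Finset.card_image_of_injOn]
  intro x hx y hy
  obtain ⟨hx, hxw⟩ := Finset.mem_filter.1 hx
  obtain ⟨hy, hyw⟩ := Finset.mem_filter.1 hy
  exact D.injOn_psi (D.mem_arcsBelow hx (hxw ▸ hw)) (D.mem_arcsBelow hy (hyw ▸ hw))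

include D in
lemma isRootN'_iff : IsRootN G' v ↔ IsRootN G v := by
  refine ⟨fun ⟨hv, h0⟩ => ?_, fun hr => ?_⟩
  · rcases D.mem_verts'.1 hv with ⟨hv, hvh⟩ | ⟨w, hw, rfl⟩
    · exact ⟨hv, D.inDeg'_of_mem hv hvh ▸ h0⟩
    · exact absurd hw (D.root_notMem_B ⟨D.mem_verts_of_mem_B hw, D.inDeg'_phi hw ▸ h0⟩)
  · have hrh := D.root_ne_h hr
    exact ⟨D.mem_verts'_of_mem hr.1 hrh, (D.inDeg'_of_mem hr.1 hrh).trans hr.2⟩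

include D in
lemma isPhylo' : IsPhylo G' where
  src_mem _ := D.src_mem'
  tgt_mem _ := D.tgt_mem'
  no_loop _ := D.no_loop'
  acyclic :=
    not_isWalk_self_of_lt_arcs (numAncestors G ∘ D.fold) fun _ => D.numAncestors_fold_lt
  root_exu := by simpa only [D.isRootN'_iff] using D.phylo.root_exu
  root_out r hr := by
    rw [D.isRootN'_iff] at hr
    rw [D.outDeg'_of_mem hr.1 (D.root_ne_h hr)]
    exact D.phylo.root_out r hr
  types v hv := by
    rcases D.mem_verts'.1 hv with ⟨hv', hvh⟩ | ⟨w, hw, rfl⟩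
    · exact vertexType_of_deg_eq hv (D.inDeg'_of_mem hv' hvh) (D.outDeg'_of_mem hv' hvh)
        (D.phylo.types v hv')
    · exact vertexType_of_deg_eq hv (D.inDeg'_phi hw) (D.outDeg'_phi hw)
        (D.phylo.types w (D.mem_verts_of_mem_B hw))

lemma isLeafN'_iff (hv : v ∈ G.verts) (hvh : v ≠ D.h) : IsLeafN G' v ↔ IsLeafN G v := by
  rw [IsLeafN, IsLeafN, D.inDeg'_of_mem hv hvh, D.outDeg'_of_mem hv hvh]
  exact and_congr_left' (iff_of_true (D.mem_verts'_of_mem hv hvh) hv)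

lemma isLeafN'_phi_iff (hw : w ∈ D.B) : IsLeafN G' (D.phi w) ↔ IsLeafN G w := by
  rw [IsLeafN, IsLeafN, D.inDeg'_phi hw, D.outDeg'_phi hw]
  exact and_congr_left' (iff_of_true (D.phi_mem_verts' hw) (D.mem_verts_of_mem_B hw))

lemma ne_h_of_isLeafN (hv : IsLeafN G v) : v ≠ D.h := fun he =>
  (by decide : (1 : ℕ) ≠ 2) (hv.2.1.symm.trans (he ▸ D.retic.2.1))

def outside : Set ℕ := {v | v ∈ G.verts ∧ v ∉ D.B ∧ v ≠ D.h}

lemma src_mem_outside (hb : b ∈ G.arcs) (ht : G.tgt b ∈ D.outside) :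
    G.src b ∈ D.outside :=
  ⟨D.phylo.src_mem b hb, fun hs => ht.2.1 (D.tgt_mem_B hb hs),
    D.src_ne_h hb fun h => ht.2.1 (h ▸ D.arc0.2.2 ▸ D.c_mem_B)⟩

lemma sameArc_of_tgt_mem_outside (hb : b ∈ G.arcs) (ht : G.tgt b ∈ D.outside) :
    SameArc G G' b :=
  D.sameArc_of_ne hb (fun h => ht.2.1 (h ▸ D.arc0.2.2 ▸ D.c_mem_B))
    (fun h => ht.2.2 (h ▸ D.arc1.2.2)) (fun h => ht.2.2 (h ▸ D.arc2.2.2))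

lemma sameArc_of_tgt'_mem_outside (he : e ∈ G'.arcs) (ht : G'.tgt e ∈ D.outside) :
    SameArc G G' e := by
  rcases D.arc_cases he with rfl | rfl | ⟨hsame, -⟩ | ⟨b, hb, rfl⟩
  · exact absurd (D.tgt_a1 ▸ D.c_mem_B) ht.2.1
  · exact absurd (D.tgt_a2 ▸ ht.1) (D.phi_notMem_verts D.c_mem_B)
  · exact hsame
  · exact absurd ((D.psi_ends b hb).2 ▸ ht.1) (D.phi_notMem_verts hb.2.2)

lemma sameArc_of_src_mem_B (hb : b ∈ G.arcs) (hs : G.src b ∈ D.B) : SameArc G G' b :=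
  have ht := D.tgt_mem_B hb hs
  D.sameArc_of_ne hb (fun h => D.h_notMem_B (by rwa [h, D.arc0.2.1] at hs))
    (fun h => D.h_notMem_B (by rwa [h, D.arc1.2.2] at ht))
    (fun h => D.h_notMem_B (by rwa [h, D.arc2.2.2] at ht))

lemma sameArc_of_src'_mem_B (he : e ∈ G'.arcs) (hs : G'.src e ∈ D.B) : SameArc G G' e := by
  rcases D.arc_cases he with rfl | rfl | ⟨hsame, -⟩ | ⟨b, hb, rfl⟩
  · exact absurd (D.src_a1 ▸ hs) D.p1_notMem_B
  · exact absurd (D.src_a2 ▸ hs) D.p2_notMem_B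
  · exact hsame
  · exact absurd ((D.psi_ends b hb).1 ▸ D.mem_verts_of_mem_B hs) (D.phi_notMem_verts hb.2.1)

lemma isWalk'_iff_of_mem_outside (hv : v ∈ D.outside) : IsWalk G' l u v ↔ IsWalk G l u v := by
  refine ⟨fun hw => ?_, fun hw => ?_⟩
  · have hup : ∀ e ∈ G'.arcs, G'.tgt e ∈ D.outside → G'.src e ∈ D.outside := fun e he ht => by
      obtain ⟨hb, -, hs, ht'⟩ := D.sameArc_of_tgt'_mem_outside he ht
      exact hs ▸ D.src_mem_outside hb (ht' ▸ ht)
    refine hw.of_sameArc (fun e he => (D.sameArc_of_tgt'_mem_outside (hw.arcs_mem e he)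
      ((hw.mem_of_upward hup hv).2 e he)).symm) hv.1
  · refine hw.of_sameArc (fun b hb => D.sameArc_of_tgt_mem_outside (hw.arcs_mem b hb)
      ((hw.mem_of_upward (fun b hb => D.src_mem_outside hb) hv).2 b hb))
      (D.mem_verts'_of_mem hv.1 hv.2.2)

lemma isWalk'_iff_of_mem_B (hu : u ∈ D.B) : IsWalk G' l u v ↔ IsWalk G l u v := by
  refine ⟨fun hw => ?_, fun hw => ?_⟩
  · have hdown : ∀ e ∈ G'.arcs, G'.src e ∈ D.B → G'.tgt e ∈ D.B := fun e he hs => by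
      obtain ⟨hb, -, hs', ht⟩ := D.sameArc_of_src'_mem_B he hs
      exact ht ▸ D.tgt_mem_B hb (hs' ▸ hs)
    obtain ⟨hv, hl⟩ := hw.mem_of_downward hdown hu
    exact hw.of_sameArc (fun e he => (D.sameArc_of_src'_mem_B (hw.arcs_mem e he)
      (hl e he)).symm) (D.mem_verts_of_mem_B hv)
  · obtain ⟨hv, hl⟩ := hw.mem_of_downward (fun b hb => D.tgt_mem_B hb) hu
    exact hw.of_sameArc (fun b hb => D.sameArc_of_src_mem_B (hw.arcs_mem b hb) (hl b hb))
      (D.mem_verts'_of_mem (D.mem_verts_of_mem_B hv) fun h => D.h_notMem_B (h ▸ hv))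

lemma isWalk'_phi_iff (hu : u ∈ D.B) (hx : x ∈ D.B) :
    IsWalk G' l (D.phi u) (D.phi x) ↔ ∃ l₀, IsWalk G l₀ u x ∧ l₀.map D.psi = l := by
  induction l generalizing u with
  | nil =>
    refine ⟨fun hw => ⟨[], ⟨D.injOn_phi hu hx hw.1, D.mem_verts_of_mem_B hu⟩, rfl⟩, ?_⟩
    rintro ⟨l₀, hw, hl₀⟩
    obtain rfl := List.map_eq_nil_iff.1 hl₀
    exact ⟨congrArg D.phi hw.1, D.phi_mem_verts' hu⟩
  | cons e t ih =>
    refine ⟨fun ⟨he, hs, hw⟩ => ?_, ?_⟩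
    · rcases D.arc_cases he with rfl | rfl | ⟨⟨hb, -, hs', -⟩, -⟩ | ⟨b, hb, rfl⟩
      · exact absurd (hs ▸ D.src_a1 ▸ D.p1_mem) (D.phi_notMem_verts hu)
      · exact absurd (hs ▸ D.src_a2 ▸ D.p2_mem) (D.phi_notMem_verts hu)
      · exact absurd (hs ▸ hs' ▸ D.phylo.src_mem e hb) (D.phi_notMem_verts hu)
      · obtain ⟨hsrc, htgt⟩ := D.psi_ends b hb
        obtain ⟨l₀, hw₀, rfl⟩ := (ih hb.2.2).1 (htgt ▸ hw)
        exact ⟨b :: l₀, ⟨hb.1, D.injOn_phi hb.2.1 hu (hsrc ▸ hs), hw₀⟩, rfl⟩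
    · rintro ⟨_ | ⟨b, l₀⟩, hw, hl₀⟩
      · simp at hl₀
      simp only [List.map_cons, List.cons.injEq] at hl₀
      obtain ⟨rfl, rfl⟩ := hl₀
      obtain ⟨hb, rfl, hw⟩ := hw
      have hbB := D.mem_arcsBelow hb hu
      exact ⟨D.psi_mem_arcs' hbB, (D.psi_ends b hbB).1,
        (D.psi_ends b hbB).2 ▸ (ih hbB.2.2).2 ⟨l₀, hw, rfl⟩⟩

lemma nPaths'_of_mem_outside (hv : v ∈ D.outside) : nPaths G' u v = nPaths G u v := by
  simp only [nPaths, D.isWalk'_iff_of_mem_outside hv]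

lemma nPaths'_of_mem_B (hu : u ∈ D.B) : nPaths G' u v = nPaths G u v := by
  simp only [nPaths, D.isWalk'_iff_of_mem_B hu]

lemma nPaths'_phi (hu : u ∈ D.B) (hx : x ∈ D.B) :
    nPaths G' (D.phi u) (D.phi x) = nPaths G u x := by
  have hW : {l | IsWalk G' l (D.phi u) (D.phi x)} = List.map D.psi '' {l | IsWalk G l u x} := by
    ext l
    simp only [Set.mem_ofPred_eq, D.isWalk'_phi_iff hu hx, Set.mem_image]
  rw [nPaths, hW, (D.injOn_psi.list_map.mono fun l hl => ?_).ncard_image, nPaths]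
  exact fun b hb => D.mem_arcsBelow (hl.arcs_mem b hb)
    ((hl.mem_of_downward (fun b hb => D.tgt_mem_B hb) hu).2 b hb)

lemma a0_mem_of_isWalk (hw : IsWalk G l u x) (hu : u ∉ D.B) (hx : x ∈ D.B) : D.a0 ∈ l := by
  obtain ⟨b, hb, hs, ht⟩ := hw.exists_mem_enter hu hx
  by_contra h0
  exact hs (D.src_mem_B (hw.arcs_mem b hb) (fun h => h0 (h ▸ hb)) ht)

lemma a1_mem_of_isWalk' (hw : IsWalk G' l u x) (hu : u ∉ D.B) (hx : x ∈ D.B) : D.a1 ∈ l := by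
  obtain ⟨e, he, hs, ht⟩ := hw.exists_mem_enter hu hx
  rcases D.arc_cases (hw.arcs_mem e he) with rfl | rfl | ⟨⟨hb, -, hs', ht'⟩, h0, -⟩ |
    ⟨b, hb, rfl⟩
  · exact he
  · exact absurd (D.tgt_a2 ▸ D.mem_verts_of_mem_B ht) (D.phi_notMem_verts D.c_mem_B)
  · exact absurd (D.src_mem_B hb h0 (ht' ▸ ht)) (hs' ▸ hs)
  · exact absurd ((D.psi_ends b hb).2 ▸ D.mem_verts_of_mem_B ht) (D.phi_notMem_verts hb.2.2)

lemma a2_mem_of_isWalk' (hw : IsWalk G' l u (D.phi x)) (hu : u ∉ D.phi '' D.B)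
    (hx : x ∈ D.B) : D.a2 ∈ l := by
  obtain ⟨e, he, hs, w, hw', ht⟩ := hw.exists_mem_enter hu (Set.mem_image_of_mem _ hx)
  rcases D.arc_cases (hw.arcs_mem e he) with rfl | rfl | ⟨⟨hb, -, -, ht'⟩, -⟩ |
    ⟨b, hb, rfl⟩
  · exact absurd (ht ▸ D.tgt_a1 ▸ D.c_mem) (D.phi_notMem_verts hw')
  · exact he
  · exact absurd (ht ▸ ht' ▸ D.phylo.tgt_mem e hb) (D.phi_notMem_verts hw')
  · exact absurd ⟨G.src b, hb.2.1, (D.psi_ends b hb).1.symm⟩ hs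

lemma nPaths_eq_add (hr : IsRootN G r) (hx : x ∈ D.B) :
    nPaths G r x = nPaths G' r x + nPaths G' r (D.phi x) := by
  have hrB := D.root_notMem_B hr
  have hG : nPaths G r x = (nPaths G r D.p1 + nPaths G r D.p2) * nPaths G D.c x := by
    rw [D.phylo.nPaths_eq_mul_of_forall_mem D.arc0.1 fun l hl => D.a0_mem_of_isWalk hl hrB hx,
      D.arc0.2.1, D.arc0.2.2, D.phylo.nPaths_eq_sum_inArcs (D.root_ne_h hr), D.inArcs_h,
      Finset.sum_pair D.ne12, D.arc1.2.1, D.arc2.2.1]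
  have hG'₁ : nPaths G' r x = nPaths G r D.p1 * nPaths G D.c x := by
    rw [D.isPhylo'.nPaths_eq_mul_of_forall_mem (D.mem_arcs'_of_mem D.arc1.1 D.ne01.symm)
      fun l hl => D.a1_mem_of_isWalk' hl hrB hx, D.src_a1, D.tgt_a1,
      D.nPaths'_of_mem_outside ⟨D.p1_mem, D.p1_notMem_B, D.p1_ne_h⟩, D.nPaths'_of_mem_B D.c_mem_B]
  have hG'₂ : nPaths G' r (D.phi x) = nPaths G r D.p2 * nPaths G D.c x := by
    have hr' : r ∉ D.phi '' D.B := fun ⟨w, hw, hrw⟩ => D.phi_notMem_verts hw (hrw ▸ hr.1)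
    rw [D.isPhylo'.nPaths_eq_mul_of_forall_mem (D.mem_arcs'_of_mem D.arc2.1 D.ne02.symm)
      fun l hl => D.a2_mem_of_isWalk' hl hr' hx, D.src_a2, D.tgt_a2,
      D.nPaths'_of_mem_outside ⟨D.p2_mem, D.p2_notMem_B, D.p2_ne_h⟩, D.nPaths'_phi D.c_mem_B hx]
  rw [hG, hG'₁, hG'₂, add_mul]

section Labels

variable {lab lab' : ℕ → ℕ} (hlab : ∀ v ∈ G.verts, v ≠ D.h → lab' v = lab v)
  (hlab_phi : ∀ w ∈ D.B, lab' (D.phi w) = lab w)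
include hlab hlab_phi

lemma exists_isLeafN_lab_eq (hv : IsLeafN G' v) : ∃ w, IsLeafN G w ∧ lab' v = lab w := by
  rcases D.mem_verts'.1 hv.1 with ⟨hv', hvh⟩ | ⟨w, hw, rfl⟩
  · exact ⟨v, (D.isLeafN'_iff hv' hvh).1 hv, hlab v hv' hvh⟩
  · exact ⟨w, (D.isLeafN'_phi_iff hw).1 hv, hlab_phi w hw⟩

open Classical in
lemma labelledLeaves'_eq (i : ℕ) :
    labelledLeaves G' lab' i =
      labelledLeaves G lab i ∪ ((labelledLeaves G lab i).filter (· ∈ D.B)).image D.phi := by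
  ext v
  simp only [labelledLeaves, Finset.mem_union, Finset.mem_filter, Finset.mem_image]
  refine ⟨fun ⟨hv, hleaf, hlv⟩ => ?_, ?_⟩
  · rcases D.mem_verts'.1 hv with ⟨hv, hvh⟩ | ⟨w, hw, rfl⟩
    · exact .inl ⟨hv, (D.isLeafN'_iff hv hvh).1 hleaf, hlab v hv hvh ▸ hlv⟩
    · exact .inr ⟨w, ⟨⟨D.mem_verts_of_mem_B hw, (D.isLeafN'_phi_iff hw).1 hleaf,
        hlab_phi w hw ▸ hlv⟩, hw⟩, rfl⟩
  · rintro (⟨hv, hleaf, hlv⟩ | ⟨w, ⟨⟨-, hleaf, hlw⟩, hw⟩, rfl⟩)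
    · have hvh := D.ne_h_of_isLeafN hleaf
      exact ⟨D.mem_verts'_of_mem hv hvh, (D.isLeafN'_iff hv hvh).2 hleaf,
        (hlab v hv hvh).trans hlv⟩
    · exact ⟨D.phi_mem_verts' hw, (D.isLeafN'_phi_iff hw).2 hleaf, (hlab_phi w hw).trans hlw⟩

lemma sum_nPaths_labelledLeaves (hr : IsRootN G r) (i : ℕ) :
    ∑ v ∈ labelledLeaves G' lab' i, nPaths G' r v =
      ∑ v ∈ labelledLeaves G lab i, nPaths G r v := by
  classical
  set F := labelledLeaves G lab i
  have hdisj : Disjoint F ((F.filter (· ∈ D.B)).image D.phi) := by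
    refine Finset.disjoint_left.2 fun v hv hv' => ?_
    obtain ⟨w, hw, rfl⟩ := Finset.mem_image.1 hv'
    exact D.phi_notMem_verts (Finset.mem_filter.1 hw).2 (Finset.mem_filter.1 hv).1
  have hinj : Set.InjOn D.phi (F.filter (· ∈ D.B)) := fun x hx y hy =>
    D.injOn_phi (Finset.mem_filter.1 hx).2 (Finset.mem_filter.1 hy).2
  rw [D.labelledLeaves'_eq hlab hlab_phi, Finset.sum_union hdisj, Finset.sum_image hinj,
    Finset.sum_filter (s := F), ← Finset.sum_add_distrib]
  refine Finset.sum_congr rfl fun v hv => ?_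
  obtain ⟨hv, hleaf, -⟩ := Finset.mem_filter.1 hv
  split_ifs with hvB
  · exact (D.nPaths_eq_add hr hvB).symm
  · exact (add_zero _).trans (D.nPaths'_of_mem_outside ⟨hv, hvB, D.ne_h_of_isLeafN hleaf⟩)

end Labels

end SplitData

lemma SplitRel.exists_splitData {N N' : MLNet} (hN : IsPhylo N.net) (hs : SplitRel N N') :
    ∃ D : SplitData N.net N'.net, (∀ v ∈ N.net.verts, v ≠ D.h → N'.lab v = N.lab v) ∧
      ∀ w ∈ D.B, N'.lab (D.phi w) = N.lab w := by
  obtain ⟨h, p1, p2, c, a0, a1, a2, phi, psi, hretic, harc0, hcut, harc1, harc2, hne12, hne01,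
    hne02, hphi, hphi', hpsi, hpsi', hverts, harcs, hkeep, hs1, ht1, hs2, ht2, hends, hlab,
    hlab_phi⟩ := hs
  exact ⟨⟨h, p1, p2, c, a0, a1, a2, phi, psi, hN, hretic, harc0, hcut, harc1, harc2, hne12,
    hne01, hne02, hphi, hphi', hpsi, hpsi', hverts, harcs, hkeep, hs1, ht1, hs2, ht2, hends⟩,
    hlab, hlab_phi⟩

theorem split_preserves_realization_general (m : List ℕ)
    (N N' : MLNet) (hN : MLRealizes N m) (hsplit : SplitRel N N') :
    MLRealizes N' m := by
  obtain ⟨hphylo, hlab_lt, hsum⟩ := hN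
  obtain ⟨D, hlab, hlab_phi⟩ := hsplit.exists_splitData hphylo
  refine ⟨D.isPhylo', fun v hv => ?_, fun i hi r hr => ?_⟩
  · obtain ⟨w, hw, hvw⟩ := D.exists_isLeafN_lab_eq hlab hlab_phi hv
    exact hvw ▸ hlab_lt w hw
  · rw [D.isRootN'_iff] at hr
    exact (D.sum_nPaths_labelledLeaves hlab hlab_phi hr i).trans (hsum i hi r hr)

/-- If `N` is a multiple-labelled network realizing a ploidy
profile `m` and `N'` is obtained from `N` by a single split operation, then `N'`
is a multiple-labelled network realizing `m`. -/
theorem split_preserves_realization (m : List ℕ) (hm : IsProfileL m)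
    (N N' : MLNet) (hN : MLRealizes N m) (hsplit : SplitRel N N') :
    MLRealizes N' m :=
  split_preserves_realization_general m N N' hN hsplit

end Ploidy
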